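/- Let R be a commutative ring, ε ∈ R with ε² = 1, S an associative R-algebra, and Q₀, Q₁, Q₂, Q₃ ∈ S satisfying the A1_ε relations. With b₀ = 1, b₁ = ε, b₂ = b₃ = 1, phase P(μ,ν) = −1 if μ ≠ ν and μ,ν ∈ {1,2,3} and P(μ,ν) = 1 otherwise, c := Q₀² + ε·Q₁² + Q₂² + Q₃², and y := c − Q₀², one has for every natural number n: Σ over μ ∈ {0,1,2,3} and all functions ν : {1,…,n} → {0,1,2,3} of b_μ · (Π_{i=1}^n b_{ν(i)}) · (Π_{i=1}^n P(μ,ν(i))) · Q_μ · Q_{ν(1)} Q_{ν(2)} ⋯ Q_{ν(n)} · Q_μ · Q_{ν(n)} ⋯ Q_{ν(2)} Q_{ν(1)} = c^{n+1} − (c^n − (c−ε)^n)·y. -/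

import Mathlib

/-- Diagonal entries `b₀ = 1, b₁ = ε, b₂ = b₃ = 1` of the inverse bilinear form
`C = diag(1,ε,1,1)` of `A1_ε`. -/
def bC {R : Type*} [CommRing R] (ε : R) : Fin 4 → R := ![1, ε, 1, 1]

/-- Grading phase: `P(μ,ν) = −1` if `μ ≠ ν` and both `μ, ν ∈ {1,2,3}`,
otherwise `P(μ,ν) = 1`. -/
def phC {R : Type*} [CommRing R] (μ ν : Fin 4) : R :=
  if μ ≠ ν ∧ μ ≠ 0 ∧ ν ≠ 0 then -1 else 1

/-!
The Casimir element `c = Q₀² + ε Q₁² + Q₂² + Q₃²` is central, and summing one chord crossing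
the `μ`-chord is an eigenvalue equation: `Σ_a b_a P(μ,a) Q_a Q_μ Q_a = λ_μ Q_μ` with `λ₀ = c`
and `λ_μ = c − ε` for `μ ≠ 0`. Contracting the parallel chords one at a time, each of them
contributes a central factor `λ_μ`, so the `μ`-summand is `b_μ λ_μⁿ Q_μ²`; summing over `μ`
gives `cⁿ Q₀² + (c − ε)ⁿ (c − Q₀²)`, which is the claimed formula.
-/

theorem sum_sandwich_eq_pow_mul {R S ι : Type*} [CommRing R] [Ring S] [Algebra R S] [Fintype ι]
    (w : ι → R) (Q : ι → S) (x l : S) (hl : ∀ a, Commute l (Q a))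
    (hx : ∑ a, w a • (Q a * x * Q a) = l * x) (n : ℕ) :
    ∑ ν : Fin n → ι, (∏ i, w (ν i)) •
      ((List.ofFn fun i => Q (ν i)).prod * x * (List.ofFn fun i => Q (ν i)).reverse.prod)
      = l ^ n * x := by
  induction n with
  | zero => simp
  | succ n ih =>
    rw [← (Fin.consEquiv fun _ => ι).sum_comp, Fintype.sum_prod_type]
    calc _ = ∑ a, w a • (Q a * (l ^ n * x) * Q a) := by
          refine Finset.sum_congr rfl fun a _ => ?_
          simp only [Fin.consEquiv_apply, Fin.prod_univ_succ, Fin.cons_zero, Fin.cons_succ,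
            List.ofFn_succ, List.prod_cons, List.reverse_cons, List.prod_append,
            List.prod_nil, mul_one, ← ih, Finset.mul_sum, Finset.sum_mul, Finset.smul_sum,
            mul_smul_comm, smul_mul_assoc, smul_smul, mul_assoc]
      _ = l ^ n * ∑ a, w a • (Q a * x * Q a) := by
          simp only [Finset.mul_sum, mul_smul_comm, ← mul_assoc, ((hl _).pow_left n).eq]
      _ = l ^ (n + 1) * x := by rw [hx, ← mul_assoc, pow_succ]

namespace A1eps

variable {R S : Type*} [CommRing R] [Ring S] [Algebra R S]

structure Relations (ε : R) (Q : Fin 4 → S) : Prop where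
  comm01 : Q 0 * Q 1 = Q 1 * Q 0
  comm02 : Q 0 * Q 2 = Q 2 * Q 0
  comm03 : Q 0 * Q 3 = Q 3 * Q 0
  anticomm12 : Q 1 * Q 2 + Q 2 * Q 1 = Q 3
  anticomm23 : Q 2 * Q 3 + Q 3 * Q 2 = ε • Q 1
  anticomm31 : Q 3 * Q 1 + Q 1 * Q 3 = Q 2

def casimir (ε : R) (Q : Fin 4 → S) : S := Q 0 ^ 2 + ε • Q 1 ^ 2 + Q 2 ^ 2 + Q 3 ^ 2

def crossingFactor (ε : R) (Q : Fin 4 → S) (μ : Fin 4) : S :=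
  if μ = 0 then casimir ε Q else casimir ε Q - ε • 1

variable {ε : R} {Q : Fin 4 → S}

theorem Relations.commute_casimir (h : Relations ε Q) (μ : Fin 4) :
    Commute (casimir ε Q) (Q μ) := by
  obtain ⟨h01, h02, h03, h12, h23, h31⟩ := h
  set e : S := algebraMap R S ε
  have he : ∀ x : S, x * e = e * x := fun x => (Algebra.commutes ε x).symm
  rw [Algebra.smul_def] at h23
  simp only [Commute, SemiconjBy, casimir, Algebra.smul_def]
  fin_cases μ <;> simp only [Fin.isValue, Fin.zero_eta, Fin.mk_one, Fin.reduceFinMk]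
  · linear_combination (norm := noncomm_ring)
      -e * (Q 1 * h01 + h01 * Q 1) - he (Q 0) * Q 1 ^ 2
      - (Q 2 * h02 + h02 * Q 2) - (Q 3 * h03 + h03 * Q 3)
  · linear_combination (norm := noncomm_ring)
      Q 0 * h01 + h01 * Q 0 - he (Q 1) * Q 1 ^ 2
      + Q 2 * h12 - h12 * Q 2 + Q 3 * h31 - h31 * Q 3
  · linear_combination (norm := noncomm_ring)
      Q 0 * h02 + h02 * Q 0 + e * (Q 1 * h12 - h12 * Q 1) - he (Q 2) * Q 1 ^ 2
      + Q 3 * h23 - h23 * Q 3 + he (Q 3) * Q 1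
  · linear_combination (norm := noncomm_ring)
      Q 0 * h03 + h03 * Q 0 + e * (Q 1 * h31 - h31 * Q 1) - he (Q 3) * Q 1 ^ 2
      + Q 2 * h23 - h23 * Q 2 + he (Q 2) * Q 1

theorem Relations.commute_crossingFactor (h : Relations ε Q) (μ a : Fin 4) :
    Commute (crossingFactor ε Q μ) (Q a) := by
  unfold crossingFactor
  split_ifs
  · exact h.commute_casimir a
  · exact (h.commute_casimir a).sub_left ((Commute.one_left (Q a)).smul_left ε)

theorem Relations.sum_crossing (h : Relations ε Q) (μ : Fin 4) :
    ∑ a, (bC ε a * phC μ a) • (Q a * Q μ * Q a) = crossingFactor ε Q μ * Q μ := by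
  obtain ⟨h01, h02, h03, h12, h23, h31⟩ := h
  set e : S := algebraMap R S ε
  have he : ∀ x : S, x * e = e * x := fun x => (Algebra.commutes ε x).symm
  rw [Algebra.smul_def] at h23
  fin_cases μ <;>
    simp only [crossingFactor, casimir, bC, phC, Fin.zero_eta, Fin.mk_one, Fin.reduceFinMk,
      Fin.isValue, ne_eq, Fin.reduceEq, one_ne_zero, not_true_eq_false, not_false_eq_true,
      true_and, false_and, and_false, and_true, and_self, ↓reduceIte, mul_ite, mul_neg, mul_one,
      one_mul, neg_mul, Algebra.smul_def, Fin.sum_univ_four, Matrix.cons_val_zero,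
      Matrix.cons_val_one, Matrix.cons_val, map_one, map_neg]
  · linear_combination (norm := noncomm_ring) e * (Q 1 * h01) + Q 2 * h02 + Q 3 * h03
  · linear_combination (norm := noncomm_ring) -(Q 0 * h01) - Q 2 * h12 - Q 3 * h31 - h23
  · linear_combination (norm := noncomm_ring)
      -(Q 0 * h02) - e * (Q 1 * h12) - Q 3 * h23 - e * h31 - he (Q 3) * Q 1
  · linear_combination (norm := noncomm_ring)
      -(Q 0 * h03) - e * (Q 1 * h31) - Q 2 * h23 - e * h12 - he (Q 2) * Q 1

theorem Relations.sum_chord_weight (h : Relations ε Q) (μ : Fin 4) (n : ℕ) :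
    ∑ ν : Fin n → Fin 4, ((∏ i, bC ε (ν i)) * ∏ i, phC μ (ν i)) •
      (Q μ * (List.ofFn fun i => Q (ν i)).prod * Q μ * (List.ofFn fun i => Q (ν i)).reverse.prod)
      = crossingFactor ε Q μ ^ n * Q μ ^ 2 := by
  have hl := h.commute_crossingFactor μ
  calc _ = Q μ * ∑ ν : Fin n → Fin 4, (∏ i, bC ε (ν i) * phC μ (ν i)) •
        ((List.ofFn fun i => Q (ν i)).prod * Q μ * (List.ofFn fun i => Q (ν i)).reverse.prod) := by
        simp only [Finset.mul_sum, mul_smul_comm, Finset.prod_mul_distrib, mul_assoc]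
    _ = _ := by
        rw [sum_sandwich_eq_pow_mul _ Q _ _ hl (h.sum_crossing μ), ← mul_assoc,
          ← ((hl μ).pow_left n).eq, mul_assoc, sq]

end A1eps

theorem A1eps_Dn_weight_general
    {R : Type*} [CommRing R] {S : Type*} [Ring S] [Algebra R S]
    (ε : R)
    (Q : Fin 4 → S)
    (h01 : Q 0 * Q 1 = Q 1 * Q 0)
    (h02 : Q 0 * Q 2 = Q 2 * Q 0)
    (h03 : Q 0 * Q 3 = Q 3 * Q 0)
    (h12 : Q 1 * Q 2 + Q 2 * Q 1 = Q 3)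
    (h23 : Q 2 * Q 3 + Q 3 * Q 2 = ε • Q 1)
    (h31 : Q 3 * Q 1 + Q 1 * Q 3 = Q 2) :
    ∀ n : ℕ,
      (∑ μ : Fin 4, ∑ ν : Fin n → Fin 4,
          (bC ε μ * (∏ i : Fin n, bC ε (ν i)) * ∏ i : Fin n, phC (R := R) μ (ν i)) •
            (Q μ * (List.ofFn fun i => Q (ν i)).prod * Q μ *
              ((List.ofFn fun i => Q (ν i)).reverse.prod)))
        = (Q 0 ^ 2 + ε • Q 1 ^ 2 + Q 2 ^ 2 + Q 3 ^ 2) ^ (n + 1)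
          - ((Q 0 ^ 2 + ε • Q 1 ^ 2 + Q 2 ^ 2 + Q 3 ^ 2) ^ n
              - ((Q 0 ^ 2 + ε • Q 1 ^ 2 + Q 2 ^ 2 + Q 3 ^ 2) - ε • (1 : S)) ^ n) *
            ((Q 0 ^ 2 + ε • Q 1 ^ 2 + Q 2 ^ 2 + Q 3 ^ 2) - Q 0 ^ 2) := by
  intro n
  have h : A1eps.Relations ε Q := ⟨h01, h02, h03, h12, h23, h31⟩
  change _ = A1eps.casimir ε Q ^ (n + 1) -
    (A1eps.casimir ε Q ^ n - (A1eps.casimir ε Q - ε • 1) ^ n) * (A1eps.casimir ε Q - Q 0 ^ 2)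
  calc _ = ∑ μ, bC ε μ • (A1eps.crossingFactor ε Q μ ^ n * Q μ ^ 2) := by
        refine Finset.sum_congr rfl fun μ _ => ?_
        rw [← h.sum_chord_weight μ n, Finset.smul_sum]
        simp only [smul_smul, mul_assoc]
    _ = _ := by
        simp only [Fin.sum_univ_four, bC, A1eps.crossingFactor, Fin.isValue, ↓reduceIte,
          Fin.reduceEq, Matrix.cons_val, one_smul, ← mul_smul_comm]
        rw [pow_succ (A1eps.casimir ε Q) n]
        generalize A1eps.casimir ε Q ^ n = A
        generalize (A1eps.casimir ε Q - ε • 1) ^ n = B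
        simp only [A1eps.casimir]
        generalize ε • Q 1 ^ 2 = T
        noncomm_ring

/-- **Weight of the chord diagram `D_n`** (one chord crossed by `n` mutually
non-intersecting parallel chords, endpoint pattern `μ ν₁ … ν_n μ ν_n … ν₁`):
for every `n`,
`Σ_{μ, ν} b_μ (Π_i b_{ν i}) (Π_i P(μ, ν i)) · Q_μ Q_{ν 1} ⋯ Q_{ν n} Q_μ Q_{ν n} ⋯ Q_{ν 1}
 = c^{n+1} − (c^n − (c−ε)^n)·y`. -/
theorem A1eps_Dn_weight
    {R : Type*} [CommRing R] {S : Type*} [Ring S] [Algebra R S]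
    (ε : R) (hε : ε ^ 2 = 1)
    (Q : Fin 4 → S)
    (h01 : Q 0 * Q 1 = Q 1 * Q 0)
    (h02 : Q 0 * Q 2 = Q 2 * Q 0)
    (h03 : Q 0 * Q 3 = Q 3 * Q 0)
    (h12 : Q 1 * Q 2 + Q 2 * Q 1 = Q 3)
    (h23 : Q 2 * Q 3 + Q 3 * Q 2 = ε • Q 1)
    (h31 : Q 3 * Q 1 + Q 1 * Q 3 = Q 2) :
    ∀ n : ℕ,
      (∑ μ : Fin 4, ∑ ν : Fin n → Fin 4,
          (bC ε μ * (∏ i : Fin n, bC ε (ν i)) * ∏ i : Fin n, phC (R := R) μ (ν i)) •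
            (Q μ * (List.ofFn fun i => Q (ν i)).prod * Q μ *
              ((List.ofFn fun i => Q (ν i)).reverse.prod)))
        = (Q 0 ^ 2 + ε • Q 1 ^ 2 + Q 2 ^ 2 + Q 3 ^ 2) ^ (n + 1)
          - ((Q 0 ^ 2 + ε • Q 1 ^ 2 + Q 2 ^ 2 + Q 3 ^ 2) ^ n
              - ((Q 0 ^ 2 + ε • Q 1 ^ 2 + Q 2 ^ 2 + Q 3 ^ 2) - ε • (1 : S)) ^ n) *
            ((Q 0 ^ 2 + ε • Q 1 ^ 2 + Q 2 ^ 2 + Q 3 ^ 2) - Q 0 ^ 2) :=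
  A1eps_Dn_weight_general ε Q h01 h02 h03 h12 h23 h31
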